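/- Let Q be a finite-dimensional real inner-product space, E, S : Q → ℝ be C¹, J : Q → End(Q) skew-symmetric (J(q)ᵀ = −J(q)), and R* : Q × Q → ℝ with R*(q,·) convex, nonnegative, R*(q,0) = 0, and R*(q, λ DE(q)) = 0 for all λ ∈ ℝ. If q : ℝ → Q is C¹ and satisfies q̇(t) = J(q(t)) DE(q(t)) + ξ(t) with ξ(t) ∈ ∂_ζ R*(q(t), DS(q(t))), and additionally J(q)DS(q) = 0 for all q, then t ↦ E(q(t)) is constant and t ↦ S(q(t)) is nondecreasing. -/

import Mathlib

open RealInnerProductSpace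

/-!
Along the flow, the chain rule gives `d/dt E(q) = ⟪DE, J DE⟫ + ⟪DE, ξ⟫` and
`d/dt S(q) = ⟪DS, J DE⟫ + ⟪DS, ξ⟫`. Skew-symmetry kills `⟪DE, J DE⟫`, and together with
`J DS = 0` also `⟪DS, J DE⟫ = -⟪J DS, DE⟫`. Testing the subgradient inequality for `ξ` along
the line `ℝ · DE`, where `R*` vanishes, forces `⟪ξ, DE⟫ = 0`; testing it at `0` gives
`⟪ξ, DS⟫ ≥ R*(DS) ≥ 0`.
-/

section Skew

variable {F : Type*} [NormedAddCommGroup F] [InnerProductSpace ℝ F] [CompleteSpace F]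
  {T : F →L[ℝ] F}

theorem ContinuousLinearMap.inner_apply_self_eq_zero_of_adjoint_eq_neg
    (hT : ContinuousLinearMap.adjoint T = -T) (x : F) : ⟪x, T x⟫ = 0 := by
  have h := T.adjoint_inner_right x x
  rw [hT, neg_apply, inner_neg_right, real_inner_comm x (T x)] at h
  linarith

theorem ContinuousLinearMap.inner_apply_eq_zero_of_adjoint_eq_neg
    (hT : ContinuousLinearMap.adjoint T = -T) {y : F} (hy : T y = 0) (x : F) :
    ⟪y, T x⟫ = 0 := by
  rw [← T.adjoint_inner_left, hT, neg_apply, hy, neg_zero, inner_zero_left]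

end Skew

section Subgradient

variable {F : Type*} [NormedAddCommGroup F] [InnerProductSpace ℝ F]

def HasSubgradientAt (f : F → ℝ) (ξ z : F) : Prop :=
  ∀ ζ, f z + ⟪ξ, ζ - z⟫ ≤ f ζ

variable {f : F → ℝ} {ξ z : F}

theorem HasSubgradientAt.inner_nonneg (h : HasSubgradientAt f ξ z) (h0 : f 0 ≤ f z) :
    0 ≤ ⟪ξ, z⟫ := by
  have := h 0
  rw [zero_sub, inner_neg_right] at this
  linarith

theorem HasSubgradientAt.inner_eq_zero_of_forall_smul_le {v : F} (h : HasSubgradientAt f ξ z)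
    (hv : ∀ lam : ℝ, f (lam • v) ≤ f z) : ⟪ξ, v⟫ = 0 := by
  have bound : ∀ lam : ℝ, lam * ⟪ξ, v⟫ ≤ ⟪ξ, z⟫ := fun lam => by
    have := h (lam • v)
    rw [inner_sub_right, real_inner_smul_right] at this
    linarith [hv lam]
  by_contra hne
  have := bound ((⟪ξ, z⟫ + 1) / ⟪ξ, v⟫)
  rw [div_mul_cancel₀ _ hne] at this
  linarith

end Subgradient

theorem hasDerivAt_comp_of_fderiv_eq_inner {F : Type*} [NormedAddCommGroup F]
    [InnerProductSpace ℝ F] {f : F → ℝ} {g : F} {γ : ℝ → F} {γ' : F} {t : ℝ}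
    (hf : DifferentiableAt ℝ f (γ t)) (hg : fderiv ℝ f (γ t) γ' = ⟪g, γ'⟫)
    (hγ : HasDerivAt γ γ' t) : HasDerivAt (fun s => f (γ s)) ⟪g, γ'⟫ t :=
  hg ▸ hf.hasFDerivAt.comp_hasDerivAt t hγ

theorem stmt16_general {Q : Type*} [NormedAddCommGroup Q] [InnerProductSpace ℝ Q]
    [FiniteDimensional ℝ Q]
    (E S : Q → ℝ) (DE DS : Q → Q)
    (hE : Differentiable ℝ E) (hS : Differentiable ℝ S)
    (hDE : ∀ p v, fderiv ℝ E p v = ⟪DE p, v⟫)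
    (hDS : ∀ p v, fderiv ℝ S p v = ⟪DS p, v⟫)
    (J : Q → Q →L[ℝ] Q)
    (hJskew : ∀ p, ContinuousLinearMap.adjoint (J p) = -(J p))
    (hJS : ∀ p, J p (DS p) = 0)
    (Rstar : Q → Q → ℝ)
    (hRpos : ∀ p ζ, 0 ≤ Rstar p ζ)
    (hR0 : ∀ p, Rstar p 0 = 0)
    (hRE : ∀ p (lam : ℝ), Rstar p (lam • DE p) = 0)
    (q : ℝ → Q) (ξ : ℝ → Q)
    (hq : ∀ t, HasDerivAt q (J (q t) (DE (q t)) + ξ t) t)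
    (hξ : ∀ t ζ, Rstar (q t) (DS (q t)) + ⟪ξ t, ζ - DS (q t)⟫ ≤ Rstar (q t) ζ) :
    (∀ t₁ t₂, E (q t₁) = E (q t₂)) ∧ Monotone (fun t => S (q t)) := by
  have hξE : ∀ t, ⟪ξ t, DE (q t)⟫ = 0 := fun t =>
    HasSubgradientAt.inner_eq_zero_of_forall_smul_le (hξ t) fun lam => hRE _ lam ▸ hRpos _ _
  have hξS : ∀ t, 0 ≤ ⟪ξ t, DS (q t)⟫ := fun t =>
    HasSubgradientAt.inner_nonneg (hξ t) (hR0 _ ▸ hRpos _ _)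
  have hE' : ∀ t, HasDerivAt (fun s => E (q s)) 0 t := fun t => by
    have h := hasDerivAt_comp_of_fderiv_eq_inner (hE _) (hDE _ _) (hq t)
    rwa [inner_add_right,
      ContinuousLinearMap.inner_apply_self_eq_zero_of_adjoint_eq_neg (hJskew _), zero_add,
      real_inner_comm, hξE] at h
  have hS' : ∀ t, HasDerivAt (fun s => S (q s)) ⟪ξ t, DS (q t)⟫ t := fun t => by
    have h := hasDerivAt_comp_of_fderiv_eq_inner (hS _) (hDS _ _) (hq t)
    rwa [inner_add_right,
      ContinuousLinearMap.inner_apply_eq_zero_of_adjoint_eq_neg (hJskew _) (hJS _), zero_add,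
      real_inner_comm] at h
  exact ⟨is_const_of_deriv_eq_zero (fun t => (hE' t).differentiableAt) fun t => (hE' t).deriv,
    monotone_of_deriv_nonneg (fun t => (hS' t).differentiableAt) fun t => (hS' t).deriv ▸ hξS t⟩

/-- GENERIC structure: energy conservation and entropy production.  If
`q̇ = J(q)DE(q) + ξ` with `ξ(t)` in the convex subdifferential of `R*(q(t),·)` at
`DS(q(t))`, `J` skew-symmetric with `J(q)DS(q) = 0`, and `R*(q,·)` convex,
nonnegative, vanishing at `0` and along `ℝ·DE(q)`, then `E∘q` is constant and
`S∘q` is nondecreasing. -/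
theorem stmt16 {Q : Type*} [NormedAddCommGroup Q] [InnerProductSpace ℝ Q]
    [FiniteDimensional ℝ Q]
    (E S : Q → ℝ) (DE DS : Q → Q)
    (hE : Differentiable ℝ E) (hS : Differentiable ℝ S)
    (hDE : ∀ p v, fderiv ℝ E p v = ⟪DE p, v⟫)
    (hDS : ∀ p v, fderiv ℝ S p v = ⟪DS p, v⟫)
    (J : Q → Q →L[ℝ] Q)
    (hJskew : ∀ p, ContinuousLinearMap.adjoint (J p) = -(J p))
    (hJS : ∀ p, J p (DS p) = 0)
    (Rstar : Q → Q → ℝ)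
    (hRconv : ∀ p, ConvexOn ℝ Set.univ (Rstar p))
    (hRpos : ∀ p ζ, 0 ≤ Rstar p ζ)
    (hR0 : ∀ p, Rstar p 0 = 0)
    (hRE : ∀ p (lam : ℝ), Rstar p (lam • DE p) = 0)
    (q : ℝ → Q) (ξ : ℝ → Q)
    (hq : ∀ t, HasDerivAt q (J (q t) (DE (q t)) + ξ t) t)
    (hξ : ∀ t ζ, Rstar (q t) (DS (q t)) + ⟪ξ t, ζ - DS (q t)⟫ ≤ Rstar (q t) ζ) :
    (∀ t₁ t₂, E (q t₁) = E (q t₂)) ∧ Monotone (fun t => S (q t)) :=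
  stmt16_general E S DE DS hE hS hDE hDS J hJskew hJS Rstar hRpos hR0 hRE q ξ hq hξ
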